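/- arXiv:1810.02437 — 2 statements merged into one kernel-verified Lean document; each statement's English description precedes it below -/
import Mathlib

section
/- Let G = G_π be a permutation graph with sink s and T a spanning tree of G. With the edge order ≺_T from Algorithm 3.1, an edge (i,j) of G \ T with h(i) ≤ h(j) is externally active if and only if h(i) = h(j), or h(i) = h(j) − 1 and i < p(j). Consequently, the external activity ext(T) equals level(φ_TC(T)). -/
open Finset
open scoped Classical

def permGraph {n : ℕ} (π : Equiv.Perm (Fin n)) : SimpleGraph (Fin n) :=
  SimpleGraph.fromRel (fun i j => i < j ∧ π.symm j < π.symm i)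

/-- `a` is visited strictly before `b` in the breadth-first search of Algorithm 3.1
on the tree `T` rooted at `s`: vertices are visited by increasing height, and within
a height by decreasing label. -/
def visitBefore {n : ℕ} (T : SimpleGraph (Fin n)) (s a b : Fin n) : Prop :=
  T.dist s a < T.dist s b ∨ (T.dist s a = T.dist s b ∧ b < a)

/-- The total order `≺_T` on edges produced by Algorithm 3.1: an edge is written
`{a, b}` with `a` its first-visited endpoint; edges are ordered by the visit order of
their first-visited endpoint, and for a common first endpoint `a`, the edge with the
larger second endpoint is smaller. -/
def edgeLT {n : ℕ} (T : SimpleGraph (Fin n)) (s : Fin n)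
    (e f : Sym2 (Fin n)) : Prop :=
  ∃ a b c d : Fin n, e = Sym2.mk a b ∧ f = Sym2.mk c d ∧
    visitBefore T s a b ∧ visitBefore T s c d ∧
    (visitBefore T s a c ∨ (a = c ∧ d < b))

/-- An edge `e` of `G` not in the spanning tree `T` is externally active for the edge
order `O` if it is the maximal edge of the unique cycle of `T ∪ {e}`, i.e. every edge
on the `T`-path between the endpoints of `e` is smaller than `e`. -/
def ExtActive {n : ℕ} (G T : SimpleGraph (Fin n))
    (O : Sym2 (Fin n) → Sym2 (Fin n) → Prop) (e : Sym2 (Fin n)) : Prop :=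
  e ∈ G.edgeSet ∧ e ∉ T.edgeSet ∧
    ∀ a b : Fin n, e = Sym2.mk a b →
      ∀ p : T.Walk a b, p.IsPath → ∀ f ∈ p.edges, O f e

noncomputable def lamStat {n : ℕ} (G T : SimpleGraph (Fin n)) (s i : Fin n) : ℕ :=
  (Finset.univ.filter fun j => G.Adj i j ∧ T.dist s i < T.dist s j).card

noncomputable def muStat {n : ℕ} (G T : SimpleGraph (Fin n)) (s i : Fin n) : ℕ :=
  (Finset.univ.filter fun j => G.Adj i j ∧ T.dist s j = T.dist s i).card

noncomputable def nuStat {n : ℕ} (G T : SimpleGraph (Fin n)) (s i : Fin n) : ℕ :=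
  (Finset.univ.filter fun j => G.Adj i j ∧ T.dist s j + 1 = T.dist s i ∧
    ∃ q : Fin n, T.Adj i q ∧ T.dist s q + 1 = T.dist s i ∧ j < q).card

/-- The configuration `c(T) = φ_TC(T)` associated with a spanning tree `T`. -/
noncomputable def treeConfig {n : ℕ} (G T : SimpleGraph (Fin n)) (s : Fin n) :
    Fin n → ℕ :=
  fun i => lamStat G T s i + muStat G T s i + nuStat G T s i

noncomputable def level {n : ℕ} (G : SimpleGraph (Fin n)) (c : Fin n → ℕ) : ℤ :=
  (∑ i, (c i : ℤ)) - (G.edgeFinset.card : ℤ)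

/-!
Since a vertex of a rooted tree has only one parent, the heights along a tree path first
decrease and then increase. So on the tree path joining the ends of a non-tree edge `{i, j}`
with `h(i) ≤ h(j)`, every edge has its lower end strictly below `i`, except, when
`h(i) < h(j)`, the last edge `{p(j), j}`; comparing that edge with `{i, j}` under `≺_T` gives the
characterisation of external activity. Summing `c_i(T)` over all `i` counts every edge
`{i, j}` of `G` with `h(i) ≤ h(j)` once at `i`, and a second time at `j` exactly when it is
externally active; hence `∑ c_i = |E| + ext(T)`.
-/

namespace Finset

theorem sum_card_filter_eq_card_filter_prod {α β : Type*} [Fintype α] [Fintype β]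
    (P : α → β → Prop) [∀ a, DecidablePred (P a)]
    [DecidablePred fun x : α × β => P x.1 x.2] :
    ∑ a, #{b | P a b} = #{x : α × β | P x.1 x.2} := by
  simp only [card_filter, Fintype.sum_prod_type]
  congr!

theorem card_filter_and_mk_eq {α : Type*} [Fintype α] [DecidableEq α]
    (P : α × α → Prop) [DecidablePred P] {a b : α} (hab : a ≠ b) :
    #{x | P x ∧ s(x.1, x.2) = s(a, b)} =
      (if P (a, b) then 1 else 0) + if P (b, a) then 1 else 0 := by
  have hfiber : ({x | P x ∧ s(x.1, x.2) = s(a, b)} : Finset (α × α)) =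
      ({(a, b), (b, a)} : Finset _).filter P := by
    ext ⟨x, y⟩
    simp only [mem_filter, mem_univ, true_and, mem_insert, mem_singleton, Sym2.eq_iff,
      Prod.mk.injEq]
    tauto
  rw [hfiber, filter_insert, filter_singleton]
  split_ifs <;> simp [hab]

end Finset

namespace SimpleGraph

variable {V : Type*} {G T : SimpleGraph V} {s : V}

theorem Walk.dist_le_length_of_mem_support {u v x : V} (p : G.Walk u v) (hx : x ∈ p.support) :
    G.dist u x ≤ p.length :=
  (dist_le _).trans (p.length_takeUntil_le_length hx)

theorem IsTree.eq_of_adj_of_dist_add_one (hT : T.IsTree) {j q q' : V}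
    (hq : T.Adj j q) (hdq : T.dist s q + 1 = T.dist s j)
    (hq' : T.Adj j q') (hdq' : T.dist s q' + 1 = T.dist s j) : q = q' := by
  obtain ⟨p, hp, -⟩ := hT.connected.exists_path_of_dist s j
  suffices h : ∀ q, T.Adj j q → T.dist s q + 1 = T.dist s j → q = p.penultimate from
    (h q hq hdq).trans (h q' hq' hdq').symm
  intro q hq hdq
  obtain ⟨r, hr, hrl⟩ := hT.connected.exists_path_of_dist s q
  have hj : j ∉ r.support := fun hj => by
    have := r.dist_le_length_of_mem_support hj
    omega
  exact hT.isAcyclic.eq_penultimate_of_adj_end hp hq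
    (hT.isAcyclic.mem_support_of_ne_mem_support_of_adj_of_isPath hp hr hq hj)

/-- Once a path in a tree steps away from the root, it keeps climbing, since a second neighbour
of `w` one level below it would be a second parent of `w`. -/
theorem IsTree.eq_or_dist_lt_of_isPath_of_ascending (hT : T.IsTree) {u w v : V}
    (p : T.Walk w v) (hp : p.IsPath) (huw : T.Adj u w) (hu : u ∉ p.support)
    (hdu : T.dist s u + 1 = T.dist s w) :
    ∀ x ∈ p.support, x = v ∨ T.dist s x < T.dist s v := by
  induction p generalizing u with
  | nil => simp
  | @cons w y v hwy q ih =>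
    rw [Walk.cons_isPath_iff] at hp
    rw [Walk.support_cons, List.mem_cons, not_or] at hu
    have hy : T.dist s w + 1 = T.dist s y := by
      rcases hT.dist_eq_dist_add_one_of_adj s hwy with h | h
      · have : u = y := hT.eq_of_adj_of_dist_add_one huw.symm hdu hwy h.symm
        exact absurd (this ▸ q.start_mem_support) hu.2
      · exact h.symm
    have ih := ih hp.1 hwy hp.2 hy
    intro x hx
    rcases List.mem_cons.1 (Walk.support_cons hwy q ▸ hx) with rfl | hx
    · rcases ih y q.start_mem_support with rfl | h <;> omega
    · exact ih x hx

theorem IsTree.eq_or_eq_or_dist_lt_max_of_isPath (hT : T.IsTree) {u v : V}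
    (p : T.Walk u v) (hp : p.IsPath) :
    ∀ x ∈ p.support, x = u ∨ x = v ∨ T.dist s x < max (T.dist s u) (T.dist s v) := by
  induction p with
  | nil => simp
  | @cons u w v huw q ih =>
    rw [Walk.cons_isPath_iff] at hp
    intro x hx
    rcases List.mem_cons.1 (Walk.support_cons huw q ▸ hx) with rfl | hx
    · exact .inl rfl
    right
    rcases hT.dist_eq_dist_add_one_of_adj s huw with h | h
    · rcases ih hp.1 x hx with rfl | rfl | hlt
      · right; omega
      · left; rfl
      · right; omega
    · rcases hT.eq_or_dist_lt_of_isPath_of_ascending q hp.1 huw hp.2 h.symm x hx with rfl | hlt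
      · left; rfl
      · right; omega

theorem IsTree.exists_dist_add_one_of_mem_edges (hT : T.IsTree) {u v : V} {p : T.Walk u v}
    (hp : p.IsPath) {f : Sym2 V} (hf : f ∈ p.edges) :
    ∃ c d, f = s(c, d) ∧ T.Adj c d ∧ T.dist s c + 1 = T.dist s d ∧
      (d = u ∨ d = v ∨ T.dist s d < max (T.dist s u) (T.dist s v)) := by
  induction f using Sym2.ind with
  | _ a b =>
    have hab := p.adj_of_mem_edges hf
    have hmem := hT.eq_or_eq_or_dist_lt_max_of_isPath (s := s) p hp
    rcases hT.dist_eq_dist_add_one_of_adj s hab with h | h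
    · exact ⟨b, a, Sym2.eq_swap, hab.symm, h.symm, hmem a (p.fst_mem_support_of_mem_edges hf)⟩
    · exact ⟨a, b, rfl, hab, h.symm, hmem b (p.snd_mem_support_of_mem_edges hf)⟩

theorem IsTree.dist_penultimate_add_one (hT : T.IsTree) {u v : V} {p : T.Walk u v}
    (hp : p.IsPath) (huv : T.dist s u < T.dist s v) :
    T.dist s p.penultimate + 1 = T.dist s v := by
  have hnil : ¬ p.Nil := Walk.not_nil_of_ne (by rintro rfl; omega)
  have hadj := p.adj_penultimate hnil
  have hmem := p.fst_mem_support_of_mem_edges (p.mk_penultimate_end_mem_edges hnil)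
  rcases hT.eq_or_eq_or_dist_lt_max_of_isPath (s := s) p hp _ hmem with h | h | h
  · rw [h] at hadj ⊢
    have := hT.dist_eq_dist_add_one_of_adj s hadj
    omega
  · exact absurd h hadj.ne
  · have := hT.dist_eq_dist_add_one_of_adj s hadj
    omega

end SimpleGraph

open SimpleGraph

/-- The condition "`h(i) = h(j) - 1` and `i < p(j)`", the parent `p(j)` being the neighbour of
`j` one level closer to the root. -/
def LtParent {V : Type*} [LT V] (T : SimpleGraph V) (s i j : V) : Prop :=
  T.dist s i + 1 = T.dist s j ∧ ∃ q, T.Adj j q ∧ T.dist s q + 1 = T.dist s j ∧ i < q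

section EdgeOrder

variable {n : ℕ} {T : SimpleGraph (Fin n)} {s : Fin n}

theorem not_visitBefore_of_dist_lt {a b : Fin n} (h : T.dist s a < T.dist s b) :
    ¬ visitBefore T s b a := by
  rintro (h' | ⟨h', -⟩) <;> omega

theorem edgeLT_mk_iff_of_dist_lt {a b c d : Fin n} (hcd : T.dist s c < T.dist s d)
    (hab : T.dist s a < T.dist s b) :
    edgeLT T s s(c, d) s(a, b) ↔ visitBefore T s c a ∨ (c = a ∧ b < d) := by
  constructor
  · rintro ⟨c', d', a', b', hf, he, hvf, hve, hord⟩
    obtain ⟨rfl, rfl⟩ : c' = c ∧ d' = d := by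
      rcases Sym2.eq_iff.1 hf with ⟨h1, h2⟩ | ⟨rfl, rfl⟩
      · exact ⟨h1.symm, h2.symm⟩
      · exact absurd hvf (not_visitBefore_of_dist_lt hcd)
    obtain ⟨rfl, rfl⟩ : a' = a ∧ b' = b := by
      rcases Sym2.eq_iff.1 he with ⟨h1, h2⟩ | ⟨rfl, rfl⟩
      · exact ⟨h1.symm, h2.symm⟩
      · exact absurd hve (not_visitBefore_of_dist_lt hab)
    exact hord
  · exact fun h => ⟨c, d, a, b, rfl, rfl, .inl hcd, .inl hab, h⟩

theorem edgeLT_mk_of_dist_lt {a b c d : Fin n} (hcd : T.dist s c < T.dist s d)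
    (hca : T.dist s c < T.dist s a) (hab : T.dist s a ≤ T.dist s b) (hne : a ≠ b) :
    edgeLT T s s(c, d) s(a, b) := by
  rcases hab.lt_or_eq with hab | hab
  · exact ⟨c, d, a, b, rfl, rfl, .inl hcd, .inl hab, .inl (.inl hca)⟩
  rcases hne.lt_or_gt with h | h
  · exact ⟨c, d, b, a, rfl, Sym2.eq_swap, .inl hcd, .inr ⟨hab.symm, h⟩,
      .inl (.inl (hab ▸ hca))⟩
  · exact ⟨c, d, a, b, rfl, rfl, .inl hcd, .inr ⟨hab, h⟩, .inl (.inl hca)⟩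

theorem edgeLT_of_mem_edges_of_isPath (hT : T.IsTree) {a b : Fin n} (hne : a ≠ b)
    (hle : T.dist s a ≤ T.dist s b) (hcond : T.dist s a = T.dist s b ∨ LtParent T s a b)
    {p : T.Walk a b} (hp : p.IsPath) {f : Sym2 (Fin n)} (hf : f ∈ p.edges) :
    edgeLT T s f s(a, b) := by
  obtain ⟨c, d, rfl, hcd, hdist, hd⟩ := hT.exists_dist_add_one_of_mem_edges hp hf
  rw [max_eq_right hle] at hd
  rcases hcond with heq | ⟨hab, q, hq, hdq, haq⟩
  · refine edgeLT_mk_of_dist_lt (by omega) ?_ hle hne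
    rcases hd with rfl | rfl | hd <;> omega
  rcases hd with rfl | rfl | hd
  · exact edgeLT_mk_of_dist_lt (by omega) (by omega) hle hne
  · obtain rfl := hT.eq_of_adj_of_dist_add_one hcd.symm hdist hq hdq
    exact (edgeLT_mk_iff_of_dist_lt (by omega) (by omega)).2 (.inl (.inr ⟨by omega, haq⟩))
  · exact edgeLT_mk_of_dist_lt (by omega) (by omega) hle hne

theorem extActive_mk_iff (hT : T.IsTree) {G : SimpleGraph (Fin n)} {a b : Fin n}
    (hab : G.Adj a b) (hle : T.dist s a ≤ T.dist s b) :
    ExtActive G T (edgeLT T s) s(a, b) ↔ T.dist s a = T.dist s b ∨ LtParent T s a b := by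
  constructor
  · rintro ⟨-, -, hpaths⟩
    by_contra hcon
    have hlt : T.dist s a < T.dist s b := hle.lt_of_ne fun h => hcon (.inl h)
    obtain ⟨p, hp, -⟩ := hT.connected.exists_path_of_dist a b
    have hnil : ¬ p.Nil := Walk.not_nil_of_ne hab.ne
    have hq := hT.dist_penultimate_add_one hp hlt
    have hlast := hpaths a b rfl p hp _ (p.mk_penultimate_end_mem_edges hnil)
    rcases (edgeLT_mk_iff_of_dist_lt (by omega) hlt).1 hlast with (h | ⟨heq, h⟩) | ⟨-, h⟩
    · omega
    · exact hcon (.inr ⟨by omega, _, (p.adj_penultimate hnil).symm, hq, h⟩)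
    · exact lt_irrefl _ h
  · intro hcond
    refine ⟨hab, fun hT' => ?_, ?_⟩
    · rcases hcond with heq | ⟨h, q, hq, hdq, haq⟩
      · exact hT.dist_ne_of_adj s hT' heq
      · exact (hT.eq_of_adj_of_dist_add_one hT'.symm h hq hdq ▸ haq).false
    · rintro x y hxy p hp f hf
      rcases Sym2.eq_iff.1 hxy with ⟨rfl, rfl⟩ | ⟨rfl, rfl⟩
      · exact edgeLT_of_mem_edges_of_isPath hT hab.ne hle hcond hp hf
      · exact edgeLT_of_mem_edges_of_isPath hT hab.ne hle hcond hp.reverse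
          (by rwa [Walk.edges_reverse, List.mem_reverse])

end EdgeOrder

section Counting

def ConfigPair {n : ℕ} (G T : SimpleGraph (Fin n)) (s i j : Fin n) : Prop :=
  G.Adj i j ∧ (T.dist s i ≤ T.dist s j ∨ LtParent T s j i)

variable {n : ℕ} {T : SimpleGraph (Fin n)} {s : Fin n}

theorem treeConfig_eq_card (G : SimpleGraph (Fin n)) (i : Fin n) :
    treeConfig G T s i = #{j | ConfigPair G T s i j} := by
  simp only [treeConfig, lamStat, muStat, nuStat, card_filter, ← sum_add_distrib]
  refine sum_congr rfl fun j _ => ?_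
  simp only [ConfigPair, LtParent]
  split_ifs <;> grind

theorem card_filter_mk_eq_one_add_extActive (hT : T.IsTree) {G : SimpleGraph (Fin n)}
    {e : Sym2 (Fin n)} (he : e ∈ G.edgeSet) :
    #{x : Fin n × Fin n | ConfigPair G T s x.1 x.2 ∧ s(x.1, x.2) = e} =
      1 + if ExtActive G T (edgeLT T s) e then 1 else 0 := by
  induction e using Sym2.ind with
  | _ a b =>
    have hab : G.Adj a b := he
    wlog hle : T.dist s a ≤ T.dist s b generalizing a b
    · rw [Sym2.eq_swap]
      exact this b a (G.mem_edgeSet.2 hab.symm) hab.symm (by omega)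
    have hba : T.dist s b ≤ T.dist s a ↔ T.dist s a = T.dist s b := by omega
    rw [card_filter_and_mk_eq _ hab.ne, extActive_mk_iff hT hab hle]
    simp [ConfigPair, hab, hab.symm, hle, hba]

theorem card_filter_extActive_eq_level (hT : T.IsTree) (G : SimpleGraph (Fin n)) :
    (#{e ∈ G.edgeFinset | ExtActive G T (edgeLT T s) e} : ℤ) =
      level G (treeConfig G T s) := by
  have hsum : ∑ i, treeConfig G T s i =
      #G.edgeFinset + #{e ∈ G.edgeFinset | ExtActive G T (edgeLT T s) e} := by
    calc ∑ i, treeConfig G T s i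
        = #{x : Fin n × Fin n | ConfigPair G T s x.1 x.2} := by
          simp only [treeConfig_eq_card]
          exact sum_card_filter_eq_card_filter_prod _
      _ = ∑ e ∈ G.edgeFinset, #{x : Fin n × Fin n |
            ConfigPair G T s x.1 x.2 ∧ s(x.1, x.2) = e} := by
          rw [card_eq_sum_card_fiberwise (t := G.edgeFinset) (f := fun x => s(x.1, x.2))]
          · simp only [filter_filter]
          · intro x hx
            simpa using (mem_filter.1 hx).2.1
      _ = ∑ e ∈ G.edgeFinset, (1 + if ExtActive G T (edgeLT T s) e then 1 else 0) :=
          sum_congr rfl fun e he => card_filter_mk_eq_one_add_extActive hT (mem_edgeFinset.1 he)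
      _ = _ := by rw [sum_add_distrib, sum_boole]; simp
  rw [level, ← Nat.cast_sum, hsum]
  push_cast
  ring

end Counting

theorem extActive_iff_and_ext_eq_level_general {n : ℕ} (π : Equiv.Perm (Fin n)) (s : Fin n)
    (T : SimpleGraph (Fin n)) (htree : T.IsTree) :
    (∀ i j : Fin n, (permGraph π).Adj i j → Sym2.mk i j ∉ T.edgeSet →
      T.dist s i ≤ T.dist s j →
      (ExtActive (permGraph π) T (edgeLT T s) (Sym2.mk i j) ↔
        (T.dist s i = T.dist s j ∨
          (T.dist s i + 1 = T.dist s j ∧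
            ∃ q : Fin n, T.Adj j q ∧ T.dist s q + 1 = T.dist s j ∧ i < q)))) ∧
    (((permGraph π).edgeFinset.filter
        (fun e => ExtActive (permGraph π) T (edgeLT T s) e)).card : ℤ) =
      level (permGraph π) (treeConfig (permGraph π) T s) :=
  ⟨fun _ _ hadj _ hle => extActive_mk_iff htree hadj hle,
    card_filter_extActive_eq_level htree _⟩

/-- for a spanning tree `T` of the permutation graph `G_π` with sink
`s`, an edge `(i, j)` of `G \ T` with `h(i) ≤ h(j)` is externally active for `≺_T` iff
`h(i) = h(j)`, or `h(i) = h(j) - 1` and `i < p(j)`; consequently the external activity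
of `T` equals the level of the configuration `φ_TC(T)`. -/
theorem extActive_iff_and_ext_eq_level {n : ℕ} (π : Equiv.Perm (Fin n)) (s : Fin n)
    (T : SimpleGraph (Fin n)) (hsub : T ≤ permGraph π) (htree : T.IsTree) :
    (∀ i j : Fin n, (permGraph π).Adj i j → Sym2.mk i j ∉ T.edgeSet →
      T.dist s i ≤ T.dist s j →
      (ExtActive (permGraph π) T (edgeLT T s) (Sym2.mk i j) ↔
        (T.dist s i = T.dist s j ∨
          (T.dist s i + 1 = T.dist s j ∧
            ∃ q : Fin n, T.Adj j q ∧ T.dist s q + 1 = T.dist s j ∧ i < q)))) ∧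
    (((permGraph π).edgeFinset.filter
        (fun e => ExtActive (permGraph π) T (edgeLT T s) e)).card : ℤ) =
      level (permGraph π) (treeConfig (permGraph π) T s) :=
  extActive_iff_and_ext_eq_level_general π s T htree
end

section
/- Let M be a complete multirooted non-ambiguous binary tree and ζ(M) the corresponding spanning tree of G_π, with the edges of G_π ordered reverse lexicographically by the coordinates of the corresponding cells in T_π. Then M has a unique root if and only if ζ(M) has no externally active edges. -/
open Finset
open scoped Classical

/-- The leaf dots of the grid `T_π`: a dot in cell `(π t, t)` for every `t`. -/
def leafDots {n : ℕ} (π : Equiv.Perm (Fin n)) : Finset (Fin n × Fin n) :=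
  Finset.univ.image (fun t => (π t, t))

/-- `q` is the nearest dot of `D` above `p` in its column, or the nearest dot of `D`
to the left of `p` in its row. -/
def dotRel {n : ℕ} (D : Finset (Fin n × Fin n)) (p q : Fin n × Fin n) : Prop :=
  p ∈ D ∧ q ∈ D ∧
    ((p.2 = q.2 ∧ q.1 < p.1 ∧ ∀ x ∈ D, x.2 = p.2 → q.1 < x.1 → p.1 ≤ x.1) ∨
     (p.1 = q.1 ∧ q.2 < p.2 ∧ ∀ x ∈ D, x.1 = p.1 → q.2 < x.2 → p.2 ≤ x.2))

/-- The graph on the dots of `D`: each dot is connected to the nearest dot above it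
(in its column) and the nearest dot to its left (in its row), when these exist. -/
def dotGraph {n : ℕ} (D : Finset (Fin n × Fin n)) : SimpleGraph (Fin n × Fin n) :=
  SimpleGraph.fromRel (dotRel D)

/-- `D` is a complete multirooted non-ambiguous binary tree (CMNAB) on `T_π`: it is
obtained from the leaf dots of `T_π` by adding `n - 1` internal dots, each having a
dot below it in its column and a dot to its right in its row, such that the induced
graph on the dots is a tree. -/
def IsCMNAB {n : ℕ} (π : Equiv.Perm (Fin n)) (D : Finset (Fin n × Fin n)) : Prop :=
  leafDots π ⊆ D ∧
  D.card = 2 * n - 1 ∧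
  (∀ p ∈ D, p ∉ leafDots π →
    (∃ q ∈ D, q.2 = p.2 ∧ p.1 < q.1) ∧ (∃ q ∈ D, q.1 = p.1 ∧ p.2 < q.2)) ∧
  (SimpleGraph.induce (↑D : Set (Fin n × Fin n)) (dotGraph D)).IsTree

/-- The map `ζ`: the subgraph of `G_π` whose edges `(a, π j)` correspond to the
internal dots `(a, j)` of `D`. -/
def zeta {n : ℕ} (π : Equiv.Perm (Fin n)) (D : Finset (Fin n × Fin n)) :
    SimpleGraph (Fin n) :=
  SimpleGraph.fromRel
    (fun a b => ∃ j : Fin n, (a, j) ∈ D ∧ (a, j) ∉ leafDots π ∧ b = π j)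

/-- There is a dot of `D` strictly above `p` in its column. -/
def DotAbove {n : ℕ} (D : Finset (Fin n × Fin n)) (p : Fin n × Fin n) : Prop :=
  ∃ q ∈ D, q.2 = p.2 ∧ q.1 < p.1

/-- There is a dot of `D` strictly to the left of `p` in its row. -/
def DotLeft {n : ℕ} (D : Finset (Fin n × Fin n)) (p : Fin n × Fin n) : Prop :=
  ∃ q ∈ D, q.1 = p.1 ∧ q.2 < p.2

/-- A root of `D` is a dot with no dot above it and no dot to its left. -/
def IsRootDot {n : ℕ} (D : Finset (Fin n × Fin n)) (p : Fin n × Fin n) : Prop :=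
  p ∈ D ∧ ¬ DotAbove D p ∧ ¬ DotLeft D p

/-- The fixed order on the edges of `G_π`: each edge `{a, b}` with `a < b` corresponds
to the cell `(a, π⁻¹ b)` of `T_π`, and edges are ordered reverse lexicographically by
the coordinates of their cells (cells to the northwest are larger). -/
def revLexEdgeLT {n : ℕ} (π : Equiv.Perm (Fin n)) (e f : Sym2 (Fin n)) : Prop :=
  ∃ a b c d : Fin n, e = Sym2.mk a b ∧ f = Sym2.mk c d ∧ a < b ∧ c < d ∧
    (c < a ∨ (c = a ∧ π.symm d < π.symm b))

/-!
A dot `(m₁, m₂)` with a dot `(a, m₂)` above it and a dot `(m₁, j)` to its left makes the edge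
`{a, π j}` of `G_π` externally active: its cell `(a, j)` is empty, since four dots at the
corners of a rectangle would close a cycle in the dot tree, and its fundamental cycle in `ζ(M)`
only uses the ζ-edges of the three dots, whose cells come later in reading order. If there is no
such dot, every dot has at most one parent (the nearest dot above or to the left), so a
connected dot tree has only one root.

Conversely, if `M` has a unique root, every dot reaches it by a walk moving only up and left,
so the tree path between the leaves of rows `a < b` runs weakly northwest of one of these two
leaves. If `{a, b}` were externally active, the ζ-path from `a` to `b` would lift, edge by edge
through the hooks of its internal dots, to a walk of dots that all come after the cell
`(a, π⁻¹ b)` in reading order. The tree path lies on both walks, and the step where it leaves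
row `a` contradicts both descriptions.
-/

open SimpleGraph

theorem Sym2.eq_and_eq_of_mk_eq_mk_of_lt {α : Type*} [Preorder α] {a b c d : α}
    (h : s(a, b) = s(c, d)) (hab : a < b) (hcd : c < d) : a = c ∧ b = d := by
  rcases Sym2.eq_iff.1 h with h | ⟨rfl, rfl⟩
  · exact h
  · exact absurd (hab.trans hcd) (lt_irrefl _)

theorem SimpleGraph.eq_of_reachable_fromRel_of_functional {α : Type*} {R : α → α → Prop}
    (hR : ∀ a b c, R a b → R a c → b = c) {r r' : α} (hr : ∀ s, ¬ R r s)
    (hr' : ∀ s, ¬ R r' s) (h : (fromRel R).Reachable r r') : r = r' := by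
  -- being `R`-connected to the sink `r` is invariant along the edges of `fromRel R`
  have step : ∀ {x y}, R x y → (Relation.ReflTransGen R x r ↔ Relation.ReflTransGen R y r) :=
    fun hxy => ⟨fun hx => by
      rcases hx.cases_head with rfl | ⟨c, hxc, hc⟩
      · exact absurd hxy (hr _)
      · exact hR _ _ _ hxy hxc ▸ hc, fun hy => .head hxy hy⟩
  have walk : ∀ {x y} (_ : (fromRel R).Walk x y),
      Relation.ReflTransGen R x r ↔ Relation.ReflTransGen R y r := by
    intro x y W
    induction W with
    | nil => rfl
    | cons hadj _ ih =>
      rcases ((fromRel_adj _ _ _).1 hadj).2 with hxy | hyx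
      · exact (step hxy).trans ih
      · exact (step hyx).symm.trans ih
  obtain ⟨W⟩ := h
  rcases ((walk W).1 .refl).cases_head with h | ⟨c, hc, -⟩
  · exact h.symm
  · exact absurd hc (hr' c)

namespace SimpleGraph.IsAcyclic

variable {V : Type*} {G : SimpleGraph V} {u v : V}

theorem eq_toPath_of_isPath (hG : G.IsAcyclic) {p : G.Walk u v} (hp : p.IsPath)
    (W : G.Walk u v) : p = W.toPath :=
  congrArg Subtype.val ((hG.subsingleton_path u v).elim ⟨p, hp⟩ W.toPath)

theorem edges_subset_of_isPath (hG : G.IsAcyclic) {p : G.Walk u v} (hp : p.IsPath)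
    (W : G.Walk u v) : p.edges ⊆ W.edges :=
  hG.eq_toPath_of_isPath hp W ▸ W.edges_toPath_subset_edges

theorem support_subset_of_isPath (hG : G.IsAcyclic) {p : G.Walk u v} (hp : p.IsPath)
    (W : G.Walk u v) : p.support ⊆ W.support :=
  hG.eq_toPath_of_isPath hp W ▸ W.support_toPath_subset_support

end SimpleGraph.IsAcyclic

theorem extActive_of_walk {n : ℕ} {G T : SimpleGraph (Fin n)}
    {O : Sym2 (Fin n) → Sym2 (Fin n) → Prop} (hT : T.IsAcyclic) {a b : Fin n}
    (hG : s(a, b) ∈ G.edgeSet) (hT' : s(a, b) ∉ T.edgeSet) (W : T.Walk a b)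
    (hW : ∀ f ∈ W.edges, O f s(a, b)) : ExtActive G T O s(a, b) := by
  refine ⟨hG, hT', fun x y hxy p hp f hf => ?_⟩
  rcases Sym2.eq_iff.1 hxy with ⟨rfl, rfl⟩ | ⟨rfl, rfl⟩
  · exact hW f (hT.edges_subset_of_isPath hp W hf)
  · refine hW f (hT.edges_subset_of_isPath hp.reverse W ?_)
    rwa [Walk.edges_reverse, List.mem_reverse]

section

variable {n : ℕ} {π : Equiv.Perm (Fin n)} {D : Finset (Fin n × Fin n)} {p q : Fin n × Fin n}

theorem mem_leafDots_iff : p ∈ leafDots π ↔ p.1 = π p.2 := by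
  simp only [leafDots, Finset.mem_image, Finset.mem_univ, true_and]
  exact ⟨fun ⟨t, ht⟩ => ht ▸ rfl, fun h => ⟨p.2, by rw [← h]⟩⟩

def rowLeaf (π : Equiv.Perm (Fin n)) (v : Fin n) : Fin n × Fin n := (v, π.symm v)

theorem rowLeaf_mem_leafDots (v : Fin n) : rowLeaf π v ∈ leafDots π :=
  mem_leafDots_iff.2 (π.apply_symm_apply v).symm

theorem dotGraph_adj_of_dotRel (h : dotRel D p q) : (dotGraph D).Adj p q := by
  refine (fromRel_adj _ _ _).2 ⟨?_, .inl h⟩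
  rintro rfl
  rcases h.2.2 with ⟨-, h, -⟩ | ⟨-, h, -⟩ <;> exact lt_irrefl _ h

theorem mem_and_mem_of_dotGraph_adj (h : (dotGraph D).Adj p q) : p ∈ D ∧ q ∈ D := by
  rcases ((fromRel_adj _ _ _).1 h).2 with h | h
  · exact ⟨h.1, h.2.1⟩
  · exact ⟨h.2.1, h.1⟩

theorem fst_eq_or_snd_eq_of_dotGraph_adj (h : (dotGraph D).Adj p q) :
    p.1 = q.1 ∨ p.2 = q.2 := by
  rcases ((fromRel_adj _ _ _).1 h).2 with ⟨-, -, h | h⟩ | ⟨-, -, h | h⟩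
  · exact .inr h.1
  · exact .inl h.1
  · exact .inr h.1.symm
  · exact .inl h.1.symm

theorem exists_dotRel_above {q₀ : Fin n × Fin n} (hp : p ∈ D) (hq₀ : q₀ ∈ D)
    (hcol : q₀.2 = p.2) (hlt : q₀.1 < p.1) :
    ∃ q, dotRel D p q ∧ q.2 = p.2 ∧ q₀.1 ≤ q.1 ∧ q.1 < p.1 := by
  obtain ⟨q, hq, hmax⟩ := (D.filter fun x => x.2 = p.2 ∧ x.1 < p.1).exists_max_image Prod.fst
    ⟨q₀, Finset.mem_filter.2 ⟨hq₀, hcol, hlt⟩⟩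
  obtain ⟨hqD, hqcol, hqlt⟩ := Finset.mem_filter.1 hq
  refine ⟨q, ⟨hp, hqD, .inl ⟨hqcol.symm, hqlt, fun x hx hxcol hqx => ?_⟩⟩, hqcol,
    hmax q₀ (Finset.mem_filter.2 ⟨hq₀, hcol, hlt⟩), hqlt⟩
  by_contra! hxp
  exact (hmax x (Finset.mem_filter.2 ⟨hx, hxcol, hxp⟩)).not_gt hqx

theorem exists_dotRel_left {q₀ : Fin n × Fin n} (hp : p ∈ D) (hq₀ : q₀ ∈ D)
    (hrow : q₀.1 = p.1) (hlt : q₀.2 < p.2) :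
    ∃ q, dotRel D p q ∧ q.1 = p.1 ∧ q₀.2 ≤ q.2 ∧ q.2 < p.2 := by
  obtain ⟨q, hq, hmax⟩ := (D.filter fun x => x.1 = p.1 ∧ x.2 < p.2).exists_max_image Prod.snd
    ⟨q₀, Finset.mem_filter.2 ⟨hq₀, hrow, hlt⟩⟩
  obtain ⟨hqD, hqrow, hqlt⟩ := Finset.mem_filter.1 hq
  refine ⟨q, ⟨hp, hqD, .inr ⟨hqrow.symm, hqlt, fun x hx hxrow hqx => ?_⟩⟩, hqrow,
    hmax q₀ (Finset.mem_filter.2 ⟨hq₀, hrow, hlt⟩), hqlt⟩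
  by_contra! hxp
  exact (hmax x (Finset.mem_filter.2 ⟨hx, hxrow, hxp⟩)).not_gt hqx

theorem exists_walk_of_snd_eq (hp : p ∈ D) (hq : q ∈ D) (hcol : q.2 = p.2)
    (hle : p.1 ≤ q.1) :
    ∃ W : (dotGraph D).Walk q p, ∀ x ∈ W.support, x.2 = p.2 ∧ p.1 ≤ x.1 := by
  induction hk : (q.1 : ℕ) using Nat.strong_induction_on generalizing q with
  | _ k ih =>
  rcases hle.lt_or_eq with hlt | heq
  · obtain ⟨q', hq', hq'col, hpq', hq'q⟩ := exists_dotRel_above hq hp hcol.symm hlt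
    obtain ⟨W, hW⟩ := ih _ (hk ▸ hq'q) hq'.2.1 (hq'col.trans hcol) hpq' rfl
    refine ⟨.cons (dotGraph_adj_of_dotRel hq') W, fun x hx => ?_⟩
    rw [Walk.support_cons, List.mem_cons] at hx
    rcases hx with rfl | hx
    exacts [⟨hcol, hle⟩, hW x hx]
  · obtain rfl : p = q := Prod.ext heq hcol.symm
    exact ⟨.nil, fun x hx => by rw [Walk.mem_support_nil_iff.1 hx]; exact ⟨rfl, le_rfl⟩⟩

theorem exists_walk_of_fst_eq (hp : p ∈ D) (hq : q ∈ D) (hrow : q.1 = p.1)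
    (hle : p.2 ≤ q.2) :
    ∃ W : (dotGraph D).Walk q p, ∀ x ∈ W.support, x.1 = p.1 ∧ p.2 ≤ x.2 := by
  induction hk : (q.2 : ℕ) using Nat.strong_induction_on generalizing q with
  | _ k ih =>
  rcases hle.lt_or_eq with hlt | heq
  · obtain ⟨q', hq', hq'row, hpq', hq'q⟩ := exists_dotRel_left hq hp hrow.symm hlt
    obtain ⟨W, hW⟩ := ih _ (hk ▸ hq'q) hq'.2.1 (hq'row.trans hrow) hpq' rfl
    refine ⟨.cons (dotGraph_adj_of_dotRel hq') W, fun x hx => ?_⟩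
    rw [Walk.support_cons, List.mem_cons] at hx
    rcases hx with rfl | hx
    exacts [⟨hrow, hle⟩, hW x hx]
  · obtain rfl : p = q := Prod.ext hrow.symm heq
    exact ⟨.nil, fun x hx => by rw [Walk.mem_support_nil_iff.1 hx]; exact ⟨rfl, le_rfl⟩⟩

theorem exists_isRootDot_walk (hp : p ∈ D) :
    ∃ r, IsRootDot D r ∧ ∃ W : (dotGraph D).Walk p r, ∀ x ∈ W.support, x ≤ p := by
  induction hk : (p.1 : ℕ) + p.2 using Nat.strong_induction_on generalizing p with
  | _ k ih =>
  have descend : ∀ q, dotRel D p q → q ≤ p → q ≠ p → ∃ r, IsRootDot D r ∧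
      ∃ W : (dotGraph D).Walk p r, ∀ x ∈ W.support, x ≤ p := by
    intro q hpq hqp hne
    have hlt : (q.1 : ℕ) + q.2 < k := hk ▸ by
      have := Prod.mk_le_mk.1 hqp
      have : q.1 ≠ p.1 ∨ q.2 ≠ p.2 := by contrapose! hne; exact Prod.ext hne.1 hne.2
      omega
    obtain ⟨r, hr, W, hW⟩ := ih _ hlt hpq.2.1 rfl
    refine ⟨r, hr, .cons (dotGraph_adj_of_dotRel hpq) W, fun x hx => ?_⟩
    rw [Walk.support_cons, List.mem_cons] at hx
    rcases hx with rfl | hx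
    exacts [le_rfl, (hW x hx).trans hqp]
  by_cases habove : DotAbove D p
  · obtain ⟨q₀, hq₀, hcol, hlt⟩ := habove
    obtain ⟨q, hpq, hqcol, -, hqp⟩ := exists_dotRel_above hp hq₀ hcol hlt
    exact descend q hpq (Prod.mk_le_mk.2 ⟨hqp.le, hqcol.le⟩) (fun h => hqp.ne (h ▸ rfl))
  by_cases hleft : DotLeft D p
  · obtain ⟨q₀, hq₀, hrow, hlt⟩ := hleft
    obtain ⟨q, hpq, hqrow, -, hqp⟩ := exists_dotRel_left hp hq₀ hrow hlt
    exact descend q hpq (Prod.mk_le_mk.2 ⟨hqrow.le, hqp.le⟩) (fun h => hqp.ne (h ▸ rfl))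
  exact ⟨p, ⟨hp, habove, hleft⟩, .nil, fun x hx => (Walk.mem_support_nil_iff.1 hx).le⟩

theorem not_dotRel_of_isRootDot (hp : IsRootDot D p) : ¬ dotRel D p q := by
  rintro ⟨-, hq, ⟨hcol, hlt, -⟩ | ⟨hrow, hlt, -⟩⟩
  exacts [hp.2.1 ⟨q, hq, hcol.symm, hlt⟩, hp.2.2 ⟨q, hq, hrow.symm, hlt⟩]

theorem dotRel_functional (hamb : ∀ m ∈ D, DotAbove D m → ¬ DotLeft D m)
    {q' : Fin n × Fin n} (hq : dotRel D p q) (hq' : dotRel D p q') : q = q' := by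
  obtain ⟨hp, hqD, ⟨hcol, hlt, hnear⟩ | ⟨hrow, hlt, hnear⟩⟩ := hq <;>
  obtain ⟨-, hq'D, ⟨hcol', hlt', hnear'⟩ | ⟨hrow', hlt', hnear'⟩⟩ := hq'
  · refine Prod.ext (le_antisymm ?_ ?_) (hcol.symm.trans hcol')
    · by_contra! h; exact (hnear' q hqD hcol.symm h).not_gt hlt
    · by_contra! h; exact (hnear q' hq'D hcol'.symm h).not_gt hlt'
  · exact absurd ⟨q', hq'D, hrow'.symm, hlt'⟩ (hamb p hp ⟨q, hqD, hcol.symm, hlt⟩)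
  · exact absurd ⟨q, hqD, hrow.symm, hlt⟩ (hamb p hp ⟨q', hq'D, hcol'.symm, hlt'⟩)
  · refine Prod.ext (hrow.symm.trans hrow') (le_antisymm ?_ ?_)
    · by_contra! h; exact (hnear' q hqD hrow.symm h).not_gt hlt
    · by_contra! h; exact (hnear q' hq'D hrow'.symm h).not_gt hlt'

theorem dotGraph_walk_support_subset {u v : Fin n × Fin n} (hu : u ∈ D)
    (W : (dotGraph D).Walk u v) : ∀ x ∈ W.support, x ∈ D := by
  induction W with
  | nil => exact fun x hx => (Walk.mem_support_nil_iff.1 hx) ▸ hu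
  | cons h W ih =>
    intro x hx
    rw [Walk.support_cons, List.mem_cons] at hx
    rcases hx with rfl | hx
    exacts [hu, ih (mem_and_mem_of_dotGraph_adj h).2 x hx]

theorem exists_walk_forall_le_or_le (h : ∃! r, IsRootDot D r) (hp : p ∈ D) (hq : q ∈ D) :
    ∃ W : (dotGraph D).Walk p q, ∀ x ∈ W.support, x ≤ p ∨ x ≤ q := by
  obtain ⟨r, hr, Wp, hWp⟩ := exists_isRootDot_walk hp
  obtain ⟨r', hr', Wq, hWq⟩ := exists_isRootDot_walk hq
  obtain rfl := h.unique hr hr'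
  refine ⟨Wp.append Wq.reverse, fun x hx => ?_⟩
  rw [Walk.mem_support_append_iff, Walk.support_reverse, List.mem_reverse] at hx
  exact hx.imp (hWp x) (hWq x)

theorem zeta_adj_iff {u v : Fin n} :
    (zeta π D).Adj u v ↔ ∃ q ∈ D, q ∉ leafDots π ∧ s(q.1, π q.2) = s(u, v) := by
  rw [zeta, fromRel_adj]
  constructor
  · rintro ⟨-, ⟨j, hj, hint, rfl⟩ | ⟨j, hj, hint, rfl⟩⟩
    exacts [⟨_, hj, hint, rfl⟩, ⟨_, hj, hint, Sym2.eq_swap⟩]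
  · rintro ⟨q, hq, hint, he⟩
    have hne : q.1 ≠ π q.2 := mt mem_leafDots_iff.2 hint
    rcases Sym2.eq_iff.1 he with ⟨rfl, rfl⟩ | ⟨rfl, rfl⟩
    exacts [⟨hne, .inl ⟨q.2, hq, hint, rfl⟩⟩, ⟨hne.symm, .inr ⟨q.2, hq, hint, rfl⟩⟩]

theorem exists_zeta_walk (hq : q ∈ D) :
    ∃ W : (zeta π D).Walk q.1 (π q.2), ∀ f ∈ W.edges, q ∉ leafDots π ∧ f = s(q.1, π q.2) := by
  by_cases hleaf : q ∈ leafDots π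
  · exact ⟨Walk.nil.copy rfl (mem_leafDots_iff.1 hleaf), by simp⟩
  · refine ⟨(zeta_adj_iff.2 ⟨q, hq, hleaf, rfl⟩).toWalk, fun f hf => ⟨hleaf, ?_⟩⟩
    simpa using hf

theorem zeta_reachable_of_dotGraph_walk {p' : Fin n × Fin n} (W : (dotGraph D).Walk p p') :
    (zeta π D).Reachable p.1 p'.1 := by
  induction W with
  | nil => rfl
  | @cons x y _ h _ ih =>
    refine .trans ?_ ih
    rcases fst_eq_or_snd_eq_of_dotGraph_adj h with hrow | hcol
    · rw [hrow]
    · obtain ⟨Wx, -⟩ := exists_zeta_walk (π := π) (mem_and_mem_of_dotGraph_adj h).1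
      obtain ⟨Wy, -⟩ := exists_zeta_walk (π := π) (mem_and_mem_of_dotGraph_adj h).2
      exact ⟨Wx.append (Wy.reverse.copy (by rw [hcol]) rfl)⟩

theorem revLexEdgeLT_mk_iff {a b c d : Fin n} (hab : a < b) (hcd : c < d) :
    revLexEdgeLT π s(a, b) s(c, d) ↔ toLex (c, π.symm d) < toLex (a, π.symm b) := by
  rw [Prod.Lex.toLex_lt_toLex]
  constructor
  · rintro ⟨a', b', c', d', he, hf, hab', hcd', h⟩
    obtain ⟨rfl, rfl⟩ := Sym2.eq_and_eq_of_mk_eq_mk_of_lt he hab hab'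
    obtain ⟨rfl, rfl⟩ := Sym2.eq_and_eq_of_mk_eq_mk_of_lt hf hcd hcd'
    exact h
  · exact fun h => ⟨a, b, c, d, rfl, rfl, hab, hcd, h⟩

namespace IsCMNAB

variable (hD : IsCMNAB π D)
include hD

/-- The leaf is the lowest dot of its column: a lower internal dot would need a dot below. -/
theorem fst_le (hp : p ∈ D) : p.1 ≤ π p.2 := by
  obtain ⟨q, hq, hmax⟩ := (D.filter fun x => x.2 = p.2).exists_max_image Prod.fst
    ⟨p, Finset.mem_filter.2 ⟨hp, rfl⟩⟩
  obtain ⟨hqD, hqcol⟩ := Finset.mem_filter.1 hq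
  have hleaf : q ∈ leafDots π := by
    by_contra hint
    obtain ⟨x, hx, hxcol, hqx⟩ := (hD.2.2.1 q hqD hint).1
    exact (hmax x (Finset.mem_filter.2 ⟨hx, hxcol.trans hqcol⟩)).not_gt hqx
  rw [← hqcol, ← mem_leafDots_iff.1 hleaf]
  exact hmax p (Finset.mem_filter.2 ⟨hp, rfl⟩)

theorem snd_le (hp : p ∈ D) : p.2 ≤ π.symm p.1 := by
  obtain ⟨q, hq, hmax⟩ := (D.filter fun x => x.1 = p.1).exists_max_image Prod.snd
    ⟨p, Finset.mem_filter.2 ⟨hp, rfl⟩⟩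
  obtain ⟨hqD, hqrow⟩ := Finset.mem_filter.1 hq
  have hleaf : q ∈ leafDots π := by
    by_contra hint
    obtain ⟨x, hx, hxrow, hqx⟩ := (hD.2.2.1 q hqD hint).2
    exact (hmax x (Finset.mem_filter.2 ⟨hx, hxrow.trans hqrow⟩)).not_gt hqx
  rw [← hqrow, mem_leafDots_iff.1 hleaf, Equiv.symm_apply_apply]
  exact hmax p (Finset.mem_filter.2 ⟨hp, rfl⟩)

theorem fst_lt (hp : p ∈ D) (hint : p ∉ leafDots π) : p.1 < π p.2 :=
  (hD.fst_le hp).lt_of_ne (mt mem_leafDots_iff.2 hint)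

theorem rowLeaf_mem (v : Fin n) : rowLeaf π v ∈ D := hD.1 (rowLeaf_mem_leafDots v)

theorem dotGraph_isAcyclic : (dotGraph D).IsAcyclic := by
  intro u c hc
  have hu : u ∈ D := by
    cases c with
    | nil => exact absurd hc Walk.not_isCycle_nil
    | cons h _ => exact (mem_and_mem_of_dotGraph_adj h).1
  refine hD.2.2.2.isAcyclic (c.induce _ (dotGraph_walk_support_subset hu c)) ?_
  exact (Walk.isCycle_map_iff_of_injective (Embedding.induce (G := dotGraph D) _).injective).1
    (by rwa [Walk.map_induce])

theorem dotGraph_reachable {u v : Fin n × Fin n} (hu : u ∈ D) (hv : v ∈ D) :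
    (dotGraph D).Reachable u v :=
  (hD.2.2.2.connected ⟨u, hu⟩ ⟨v, hv⟩).map (Embedding.induce _).toHom

theorem exists_walk_support_subset_inter {u v : Fin n × Fin n}
    (W₁ W₂ : (dotGraph D).Walk u v) :
    ∃ P : (dotGraph D).Walk u v, ∀ x ∈ P.support, x ∈ W₁.support ∧ x ∈ W₂.support :=
  ⟨W₁.toPath, fun _ hx => ⟨W₁.support_toPath_subset_support hx,
    hD.dotGraph_isAcyclic.support_subset_of_isPath W₁.toPath.2 W₂ hx⟩⟩

/-- The two staircase walks around a rectangle of dots would give two different paths. -/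
theorem not_rectangle {c₁ c₂ d₁ d₂ : Fin n} (hc : c₁ < c₂) (hd : d₁ < d₂)
    (h₁₁ : (c₁, d₁) ∈ D) (h₁₂ : (c₁, d₂) ∈ D) (h₂₁ : (c₂, d₁) ∈ D) (h₂₂ : (c₂, d₂) ∈ D) :
    False := by
  obtain ⟨R₁, hR₁⟩ := exists_walk_of_fst_eq h₁₁ h₁₂ rfl hd.le
  obtain ⟨C₁, hC₁⟩ := exists_walk_of_snd_eq h₁₂ h₂₂ rfl hc.le
  obtain ⟨C₂, hC₂⟩ := exists_walk_of_snd_eq h₁₁ h₂₁ rfl hc.le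
  obtain ⟨R₂, hR₂⟩ := exists_walk_of_fst_eq h₂₁ h₂₂ rfl hd.le
  obtain ⟨P, hP⟩ := hD.exists_walk_support_subset_inter (C₁.append R₁).reverse
    (R₂.append C₂).reverse
  obtain ⟨⟨⟨x, y⟩, hxy⟩, hdart, rfl, hy⟩ := P.exists_boundary_dart {(c₁, d₁)} rfl
    (fun h => hc.ne' (congrArg Prod.fst h))
  obtain ⟨hy₁, hy₂⟩ := hP y (P.dart_snd_mem_support_of_mem_darts hdart)
  simp only [Walk.support_reverse, List.mem_reverse, Walk.mem_support_append_iff] at hy₁ hy₂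
  have h₁ : y.2 = d₂ ∨ y.1 = c₁ := hy₁.imp (fun h => (hC₁ y h).1) (fun h => (hR₁ y h).1)
  have h₂ : y.1 = c₂ ∨ y.2 = d₁ := hy₂.imp (fun h => (hR₂ y h).1) (fun h => (hC₂ y h).1)
  obtain rfl : y = (c₂, d₂) := by
    rcases h₁ with h₁ | h₁ <;> rcases h₂ with h₂ | h₂
    · exact Prod.ext h₂ h₁
    · exact absurd (h₁.symm.trans h₂) hd.ne'
    · exact absurd (h₁.symm.trans h₂) hc.ne
    · exact absurd (Prod.ext h₁ h₂) hy
  rcases fst_eq_or_snd_eq_of_dotGraph_adj hxy with h | h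
  exacts [hc.ne h, hd.ne h]

/-- The hook of `q`: along its row from the leaf to `q`, then down its column to the leaf. -/
theorem exists_hook_walk (hq : q ∈ D) :
    ∃ W : (dotGraph D).Walk (rowLeaf π q.1) (rowLeaf π (π q.2)),
      ∀ x ∈ W.support, toLex q ≤ toLex x := by
  obtain ⟨R, hR⟩ := exists_walk_of_fst_eq hq (hD.rowLeaf_mem q.1) rfl (hD.snd_le hq)
  obtain ⟨C, hC⟩ := exists_walk_of_snd_eq hq (hD.rowLeaf_mem (π q.2))
    (π.symm_apply_apply q.2) (hD.fst_le hq)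
  refine ⟨R.append C.reverse, fun x hx => Prod.Lex.toLex_le_toLex.2 ?_⟩
  rw [Walk.mem_support_append_iff, Walk.support_reverse, List.mem_reverse] at hx
  rcases hx with hx | hx
  · exact .inr ⟨(hR x hx).1.symm, (hR x hx).2⟩
  · obtain ⟨hcol, hle⟩ := hC x hx
    rcases hle.lt_or_eq with hlt | heq
    exacts [.inl hlt, .inr ⟨heq, hcol.ge⟩]

theorem exists_dotAbove_and_dotLeft_of_isRootDot_ne {r r' : Fin n × Fin n} (hr : IsRootDot D r)
    (hr' : IsRootDot D r') (hne : r ≠ r') : ∃ m ∈ D, DotAbove D m ∧ DotLeft D m := by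
  by_contra! hamb
  exact hne <| eq_of_reachable_fromRel_of_functional (R := dotRel D)
    (fun _ _ _ => dotRel_functional hamb) (fun _ => not_dotRel_of_isRootDot hr)
    (fun _ => not_dotRel_of_isRootDot hr') (hD.dotGraph_reachable hr.1 hr'.1)

theorem revLexEdgeLT_dot_iff {a b : Fin n} (hq : q ∈ D) (hint : q ∉ leafDots π) (hab : a < b) :
    revLexEdgeLT π s(q.1, π q.2) s(a, b) ↔ toLex (a, π.symm b) < toLex q := by
  rw [revLexEdgeLT_mk_iff (hD.fst_lt hq hint) hab, π.symm_apply_apply]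

theorem zeta_connected : (zeta π D).Connected := by
  obtain ⟨⟨p, -⟩⟩ := hD.2.2.2.connected.nonempty
  have : Nonempty (Fin n) := ⟨p.1⟩
  exact ⟨fun u v => (hD.dotGraph_reachable (hD.rowLeaf_mem u) (hD.rowLeaf_mem v)).elim
    zeta_reachable_of_dotGraph_walk⟩

theorem zeta_isTree : (zeta π D).IsTree := by
  obtain ⟨⟨p, -⟩⟩ := hD.2.2.2.connected.nonempty
  have hedges : (zeta π D).edgeSet =
      (fun q : Fin n × Fin n => s(q.1, π q.2)) '' ↑(D \ leafDots π) := by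
    ext e
    induction e using Sym2.ind with
    | _ u v => simp [zeta_adj_iff, and_assoc]
  have hinj : Set.InjOn (fun q : Fin n × Fin n => s(q.1, π q.2)) ↑(D \ leafDots π) := by
    intro q hq q' hq' he
    simp only [Finset.coe_sdiff, Set.mem_sdiff, Finset.mem_coe] at hq hq'
    rcases Sym2.eq_iff.1 he with ⟨h₁, h₂⟩ | ⟨h₁, h₂⟩
    · exact Prod.ext h₁ (π.injective h₂)
    · exact absurd ((h₁ ▸ hD.fst_lt hq.1 hq.2).trans (h₂ ▸ hD.fst_lt hq'.1 hq'.2)) (lt_irrefl _)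
  have hleaves : (leafDots π).card = n := by
    rw [leafDots, Finset.card_image_of_injective _ fun a b h => congrArg Prod.snd h,
      Finset.card_univ, Fintype.card_fin]
  refine isTree_iff_connected_and_card.2 ⟨hD.zeta_connected, ?_⟩
  rw [Nat.card_coe_set_eq, hedges, hinj.ncard_image, Set.ncard_coe_finset,
    Finset.card_sdiff_of_subset hD.1, hD.2.1, hleaves, Nat.card_eq_fintype_card,
    Fintype.card_fin]
  have := p.1.pos
  omega

theorem exists_dotGraph_walk_of_zeta_walk (c : Fin n × Fin n) {u v : Fin n}
    (W : (zeta π D).Walk u v)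
    (hW : ∀ q ∈ D, q ∉ leafDots π → s(q.1, π q.2) ∈ W.edges → toLex c < toLex q)
    (hv : toLex c < toLex (rowLeaf π v)) :
    ∃ W' : (dotGraph D).Walk (rowLeaf π u) (rowLeaf π v), ∀ x ∈ W'.support,
      toLex c < toLex x := by
  induction W with
  | nil => exact ⟨.nil, fun x hx => Walk.mem_support_nil_iff.1 hx ▸ hv⟩
  | @cons u w v h W ih =>
    obtain ⟨q, hq, hint, he⟩ := zeta_adj_iff.1 h
    have hcq : toLex c < toLex q := hW q hq hint (by simp [he])
    obtain ⟨W', hW'⟩ := ih (fun q hq hint hqW => hW q hq hint (by simp [hqW])) hv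
    obtain ⟨H, hH⟩ := hD.exists_hook_walk hq
    have hHc : ∀ x ∈ H.support, toLex c < toLex x := fun x hx => hcq.trans_le (hH x hx)
    rcases Sym2.eq_iff.1 he with ⟨rfl, rfl⟩ | ⟨rfl, rfl⟩
    · refine ⟨H.append (W'.copy (by simp [rowLeaf]) rfl), fun x hx => ?_⟩
      rw [Walk.mem_support_append_iff, Walk.support_copy] at hx
      exact hx.elim (hHc x) (hW' x)
    · refine ⟨(H.reverse.copy (by simp [rowLeaf]) rfl).append W', fun x hx => ?_⟩
      rw [Walk.mem_support_append_iff, Walk.support_copy, Walk.support_reverse,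
        List.mem_reverse] at hx
      exact hx.elim (hHc x) (hW' x)

theorem not_extActive_of_existsUnique_isRootDot (h : ∃! r, IsRootDot D r) (e : Sym2 (Fin n)) :
    ¬ ExtActive (permGraph π) (zeta π D) (revLexEdgeLT π) e := by
  intro hact
  induction e using Sym2.ind with
  | _ u v =>
  obtain ⟨a, b, hab, huv⟩ : ∃ a b, a < b ∧ s(u, v) = s(a, b) := by
    rcases lt_or_gt_of_ne ((mem_edgeSet _).1 hact.1).ne with h | h
    exacts [⟨u, v, h, rfl⟩, ⟨v, u, h, Sym2.eq_swap⟩]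
  obtain ⟨-, -, hmax⟩ := huv ▸ hact
  obtain ⟨Z⟩ := hD.zeta_connected.preconnected a b
  obtain ⟨G, hG⟩ := hD.exists_dotGraph_walk_of_zeta_walk (a, π.symm b)
    (Z.toPath : (zeta π D).Walk a b)
    (fun q hq hint hqZ =>
      (hD.revLexEdgeLT_dot_iff hq hint hab).1 (hmax a b rfl _ Z.toPath.2 _ hqZ))
    (Prod.Lex.toLex_lt_toLex.2 (.inl hab))
  obtain ⟨R, hR⟩ := exists_walk_forall_le_or_le h (hD.rowLeaf_mem a) (hD.rowLeaf_mem b)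
  obtain ⟨P, hP⟩ := hD.exists_walk_support_subset_inter G R
  obtain ⟨⟨⟨x, y⟩, hxy⟩, hdart, hx, hy⟩ := P.exists_boundary_dart {x | x.1 ≤ a} (le_refl a)
    (not_le.2 hab)
  change x.1 ≤ a at hx
  replace hy : a < y.1 := not_le.1 hy
  have hxcol : π.symm b < x.2 := by
    rcases Prod.Lex.toLex_lt_toLex.1 (hG x (hP x (P.dart_fst_mem_support_of_mem_darts hdart)).1)
      with hlt | ⟨-, hlt⟩
    exacts [absurd hx hlt.not_ge, hlt]
  have hycol : y.2 ≤ π.symm b := by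
    rcases hR y (hP y (P.dart_snd_mem_support_of_mem_darts hdart)).2 with hle | hle
    exacts [absurd (Prod.le_def.1 hle).1 (not_le.2 hy), (Prod.le_def.1 hle).2]
  rcases fst_eq_or_snd_eq_of_dotGraph_adj hxy with hrow | hcol
  · exact not_le.2 hy (hrow ▸ hx)
  · exact hycol.not_gt (hcol ▸ hxcol)

theorem exists_extActive_of_dotAbove_of_dotLeft {m : Fin n × Fin n} (hm : m ∈ D)
    (hA : DotAbove D m) (hL : DotLeft D m) :
    ∃ e, ExtActive (permGraph π) (zeta π D) (revLexEdgeLT π) e := by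
  obtain ⟨m₁, m₂⟩ := m
  obtain ⟨⟨a, c⟩, ht, hc, ha⟩ := hA
  obtain ⟨⟨r, j⟩, hl, hr, hj⟩ := hL
  dsimp only at hc ha hr hj
  subst c r
  have hab : a < π j := ha.trans_le (hD.fst_le hl)
  have ht' : (a, m₂) ∉ leafDots π := fun h =>
    (ha.trans_le (hD.fst_le hm)).ne (mem_leafDots_iff.1 h)
  have hl' : (m₁, j) ∉ leafDots π := fun h => by
    have := hD.snd_le hm
    rw [show m₁ = π j from mem_leafDots_iff.1 h, π.symm_apply_apply] at this
    exact this.not_gt hj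
  have later : ∀ q ∈ D, q ∉ leafDots π → toLex (a, j) < toLex q →
      revLexEdgeLT π s(q.1, π q.2) s(a, π j) := fun q hq hint hlt =>
    (hD.revLexEdgeLT_dot_iff hq hint hab).2 (by rwa [π.symm_apply_apply])
  obtain ⟨Wt, hWt⟩ := exists_zeta_walk (π := π) ht
  obtain ⟨Wm, hWm⟩ := exists_zeta_walk (π := π) hm
  obtain ⟨Wl, hWl⟩ := exists_zeta_walk (π := π) hl
  refine ⟨s(a, π j), extActive_of_walk hD.zeta_isTree.isAcyclic ?_ ?_
    (Wt.append (Wm.reverse.append Wl)) ?_⟩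
  · rw [mem_edgeSet, permGraph, fromRel_adj, π.symm_apply_apply]
    exact ⟨hab.ne, .inl ⟨hab, hj.trans_le (hD.snd_le ht)⟩⟩
  · rw [mem_edgeSet, zeta_adj_iff]
    rintro ⟨q, hq, hint, he⟩
    rcases Sym2.eq_iff.1 he with ⟨h₁, h₂⟩ | ⟨h₁, h₂⟩
    · exact hD.not_rectangle ha hj ((Prod.ext h₁ (π.injective h₂) : q = (a, j)) ▸ hq) ht hl hm
    · exact (h₁ ▸ h₂ ▸ hD.fst_lt hq hint).not_gt hab
  · intro f hf
    simp only [Walk.edges_append, Walk.edges_reverse, List.mem_append, List.mem_reverse] at hf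
    rcases hf with hf | hf | hf
    · obtain ⟨hint, rfl⟩ := hWt f hf
      exact later _ ht hint (Prod.Lex.toLex_lt_toLex.2 (.inr ⟨rfl, hj⟩))
    · obtain ⟨hint, rfl⟩ := hWm f hf
      exact later _ hm hint (Prod.Lex.toLex_lt_toLex.2 (.inl ha))
    · obtain ⟨hint, rfl⟩ := hWl f hf
      exact later _ hl hint (Prod.Lex.toLex_lt_toLex.2 (.inl ha))

end IsCMNAB

end

/-- a CMNAB `M` has a unique root if and only if the spanning tree
`ζ(M)` of `G_π` has no externally active edge, for the reverse lexicographic order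
on the edges of `G_π` given by the coordinates of the corresponding cells. -/
theorem cmnab_unique_root_iff_no_extActive {n : ℕ} (π : Equiv.Perm (Fin n))
    (D : Finset (Fin n × Fin n)) (hD : IsCMNAB π D) :
    (∃! p, IsRootDot D p) ↔
      ∀ e : Sym2 (Fin n),
        ¬ ExtActive (permGraph π) (zeta π D) (revLexEdgeLT π) e := by
  refine ⟨hD.not_extActive_of_existsUnique_isRootDot, fun hno => ?_⟩
  obtain ⟨⟨p, hp⟩⟩ := hD.2.2.2.connected.nonempty
  obtain ⟨r, hr, -⟩ := exists_isRootDot_walk hp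
  refine ⟨r, hr, fun r' hr' => by_contra fun hne => ?_⟩
  obtain ⟨m, hm, hA, hL⟩ := hD.exists_dotAbove_and_dotLeft_of_isRootDot_ne hr' hr hne
  obtain ⟨e, he⟩ := hD.exists_extActive_of_dotAbove_of_dotLeft hm hA hL
  exact hno e he
end
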